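/- Let λ > 0 and δ > 0, and let g : (0,δ) → ℝ be measurable with ∫₀^δ t^{-2λ} g(t)² dt/t < ∞. Then: (i) t ↦ g(t)/t is integrable on (0,v) for every v ∈ (0,δ), so that u(v) := ∫₀^v g(t)/t dt is well defined; (ii) ∫₀^δ v^{-2λ} u(v)² dv/v ≤ (1/λ²) · ∫₀^δ t^{-2λ} g(t)² dt/t (in particular the bound is independent of δ); (iii) u is locally absolutely continuous on (0,δ) with v·u'(v) = g(v) for almost every v; (iv) u is the unique locally absolutely continuous function w on (0,δ) satisfying v·w'(v) = g(v) almost everywhere and ∫₀^δ v^{-2λ} w(v)² dv/v < ∞. -/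

import Mathlib

/-!
The bound is Hardy's inequality: Cauchy–Schwarz against the weight `t^(λ-1)` gives
`u(v)² ≤ (v^λ/λ) ∫₀^v t^(-λ) g(t)² dt/t`; integrating against `v^(-2λ-1)` and exchanging the
order of integration yields the constant `1/λ²`. The same Cauchy–Schwarz with weight `t^(2λ-1)`
shows that `g(t)/t` is integrable on `(0,δ)`, so `u` is there the primitive of an integrable
function on `ℝ` and the Lebesgue differentiation theorem applies. Two such primitives differ by a
constant, and a nonzero constant is not in the weighted space since `v^(-2λ-1)` is not integrable
at `0`.
-/

open MeasureTheory Set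
open scoped ENNReal

section Primitive

variable {E : Type*} [NormedAddCommGroup E] [NormedSpace ℝ E] {f : ℝ → E} {δ : ℝ}

theorem integral_Ioo_zero_eq_intervalIntegral_indicator {x : ℝ} (hx : x ∈ Icc 0 δ) :
    ∫ t in Ioo 0 x, f t = ∫ t in 0..x, (Ioo 0 δ).indicator f t := by
  rw [intervalIntegral.integral_of_le hx.1, integral_Ioc_eq_integral_Ioo]
  refine setIntegral_congr_fun measurableSet_Ioo fun t ht => ?_
  exact (indicator_of_mem (Ioo_subset_Ioo_right hx.2 ht) f).symm

theorem integral_Ioo_zero_sub_integral_Ioo_zero (hf : IntegrableOn f (Ioo 0 δ)) {a b : ℝ}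
    (ha : a ∈ Ioo 0 δ) (hb : b ∈ Ioo 0 δ) :
    (∫ t in Ioo 0 b, f t) - ∫ t in Ioo 0 a, f t = ∫ t in a..b, f t := by
  have hF := hf.integrable_indicator measurableSet_Ioo
  rw [integral_Ioo_zero_eq_intervalIntegral_indicator (Ioo_subset_Icc_self ha),
    integral_Ioo_zero_eq_intervalIntegral_indicator (Ioo_subset_Icc_self hb),
    intervalIntegral.integral_interval_sub_left hF.intervalIntegrable hF.intervalIntegrable]
  refine intervalIntegral.integral_congr fun t ht => indicator_of_mem ?_ f
  exact ordConnected_Ioo.uIcc_subset ha hb ht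

theorem continuousOn_integral_Ioo_zero (hf : IntegrableOn f (Ioo 0 δ)) :
    ContinuousOn (fun x => ∫ t in Ioo 0 x, f t) (Icc 0 δ) := by
  refine ((hf.integrable_indicator measurableSet_Ioo).continuous_primitive 0).continuousOn.congr
    fun x hx => ?_
  exact integral_Ioo_zero_eq_intervalIntegral_indicator hx

theorem ae_hasDerivAt_integral_Ioo_zero [CompleteSpace E] (hf : IntegrableOn f (Ioo 0 δ)) :
    ∀ᵐ v ∂volume.restrict (Ioo 0 δ), HasDerivAt (fun x => ∫ t in Ioo 0 x, f t) (f v) v := by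
  have hF := (hf.integrable_indicator measurableSet_Ioo).locallyIntegrable
  rw [ae_restrict_iff' measurableSet_Ioo]
  filter_upwards [LocallyIntegrable.ae_hasDerivAt_integral hF] with v hv hvδ
  rw [← indicator_of_mem hvδ f]
  refine (hv 0).congr_of_eventuallyEq ?_
  filter_upwards [isOpen_Ioo.mem_nhds hvδ] with x hx
  exact integral_Ioo_zero_eq_intervalIntegral_indicator (Ioo_subset_Icc_self hx)

end Primitive

theorem sq_lintegral_mul_le {α : Type*} [MeasurableSpace α] {μ : Measure α} {f g : α → ℝ≥0∞}
    (hf : AEMeasurable f μ) (hg : AEMeasurable g μ) :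
    (∫⁻ a, f a * g a ∂μ) ^ 2 ≤ (∫⁻ a, f a ^ 2 ∂μ) * ∫⁻ a, g a ^ 2 ∂μ := by
  have h := ENNReal.lintegral_mul_le_Lp_mul_Lq μ Real.HolderConjugate.two_two hf hg
  calc (∫⁻ a, f a * g a ∂μ) ^ 2
      ≤ ((∫⁻ a, f a ^ (2 : ℝ) ∂μ) ^ (1 / (2 : ℝ)) * (∫⁻ a, g a ^ (2 : ℝ) ∂μ) ^ (1 / (2 : ℝ))) ^ 2 :=
        pow_le_pow_left' h 2
    _ = (∫⁻ a, f a ^ 2 ∂μ) * ∫⁻ a, g a ^ 2 ∂μ := by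
        simp only [mul_pow, ← ENNReal.rpow_natCast, ← ENNReal.rpow_mul]
        norm_num

theorem lintegral_Ioo_zero_rpow_sub_one {s v : ℝ} (hs : 0 < s) (hv : 0 ≤ v) :
    ∫⁻ t in Ioo 0 v, ENNReal.ofReal (t ^ (s - 1)) = ENNReal.ofReal (v ^ s / s) := by
  have hint := (intervalIntegral.intervalIntegrable_rpow' (by linarith : -1 < s - 1)
    (a := 0) (b := v)).1.mono_set Ioo_subset_Ioc_self
  rw [← ofReal_integral_eq_lintegral_ofReal hint, ← integral_Ioc_eq_integral_Ioo,
    ← intervalIntegral.integral_of_le hv, integral_rpow (Or.inl (by linarith))]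
  · simp [Real.zero_rpow hs.ne']
  · filter_upwards [ae_restrict_mem measurableSet_Ioo] with t ht
    exact Real.rpow_nonneg ht.1.le _

theorem lintegral_Ioi_rpow_neg_sub_one {s c : ℝ} (hs : 0 < s) (hc : 0 < c) :
    ∫⁻ t in Ioi c, ENNReal.ofReal (t ^ (-s - 1)) = ENNReal.ofReal (c ^ (-s) / s) := by
  rw [← ofReal_integral_eq_lintegral_ofReal (integrableOn_Ioi_rpow_of_lt (by linarith) hc),
    integral_Ioi_rpow_of_lt (by linarith) hc]
  · congr 1
    rw [sub_add_cancel, neg_div_neg_eq]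
  · filter_upwards [ae_restrict_mem measurableSet_Ioi] with t ht
    exact Real.rpow_nonneg (hc.trans ht).le _

theorem lintegral_Ioo_zero_rpow_eq_top {r δ : ℝ} (hr : r ≤ -1) (hδ : 0 < δ) :
    ∫⁻ t in Ioo 0 δ, ENNReal.ofReal (t ^ r) = ⊤ := by
  by_contra h
  have hint : IntegrableOn (fun t : ℝ => t ^ r) (Ioo 0 δ) := by
    refine ⟨by fun_prop, (hasFiniteIntegral_iff_ofReal ?_).2 (lt_top_iff_ne_top.2 h)⟩
    filter_upwards [ae_restrict_mem measurableSet_Ioo] with t ht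
    exact Real.rpow_nonneg ht.1.le _
  linarith [(intervalIntegral.integrableOn_Ioo_rpow_iff hδ).1 hint]

theorem lintegral_Ioo_mul_lintegral_Ioo_swap {a b : ℝ} {φ ψ : ℝ → ℝ≥0∞} (hφ : Measurable φ)
    (hψ : Measurable ψ) :
    ∫⁻ v in Ioo a b, ψ v * ∫⁻ t in Ioo a v, φ t = ∫⁻ t in Ioo a b, φ t * ∫⁻ v in Ioo t b, ψ v := by
  have hswap : ∀ v t, ψ v * (Iio v).indicator φ t = φ t * (Ioi t).indicator ψ v := by
    intro v t
    by_cases h : t < v <;> simp [h, mul_comm]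
  have hK : Measurable fun p : ℝ × ℝ => ψ p.1 * (Iio p.1).indicator φ p.2 :=
    (hψ.comp measurable_fst).mul
      ((hφ.comp measurable_snd).indicator (measurableSet_lt measurable_snd measurable_fst))
  calc ∫⁻ v in Ioo a b, ψ v * ∫⁻ t in Ioo a v, φ t
      = ∫⁻ v in Ioo a b, ∫⁻ t in Ioo a b, ψ v * (Iio v).indicator φ t := by
        refine setLIntegral_congr_fun measurableSet_Ioo fun v hv => ?_
        rw [lintegral_const_mul _ (hφ.indicator measurableSet_Iio),
          setLIntegral_indicator measurableSet_Iio, Iio_inter_Ioo, min_eq_left hv.2.le]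
    _ = ∫⁻ t in Ioo a b, ∫⁻ v in Ioo a b, ψ v * (Iio v).indicator φ t :=
        lintegral_lintegral_swap hK.aemeasurable
    _ = ∫⁻ t in Ioo a b, φ t * ∫⁻ v in Ioo t b, ψ v := by
        refine setLIntegral_congr_fun measurableSet_Ioo fun t ht => ?_
        have hIoo : Ioi t ∩ Ioo a b = Ioo t b := by
          ext v; simp only [mem_inter_iff, mem_Ioi, mem_Ioo]; grind
        simp only [hswap]
        rw [lintegral_const_mul _ (hψ.indicator measurableSet_Ioi),
          setLIntegral_indicator measurableSet_Ioi, hIoo]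

/-- The squared norm `‖f‖²_λ` of `v^λ L²_b((0,δ))`. -/
noncomputable def weightedNormSq (lam δ : ℝ) (f : ℝ → ℝ) : ℝ≥0∞ :=
  ∫⁻ t in Ioo 0 δ, ENNReal.ofReal (t ^ (-(2 * lam)) * f t ^ 2 / t)

theorem sq_lintegral_enorm_div_self_le (s v : ℝ) {g : ℝ → ℝ} (hg : Measurable g) :
    (∫⁻ t in Ioo 0 v, ‖g t / t‖ₑ) ^ 2 ≤
      (∫⁻ t in Ioo 0 v, ENNReal.ofReal (t ^ (s - 1))) *
        ∫⁻ t in Ioo 0 v, ENNReal.ofReal (t ^ (-s) * g t ^ 2 / t) := by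
  set A : ℝ → ℝ := fun t => t ^ (s - 1)
  set B : ℝ → ℝ := fun t => t ^ (-s) * g t ^ 2 / t
  have hsqrt : ∀ x : ℝ, 0 ≤ x → ENNReal.ofReal (√x) ^ 2 = ENNReal.ofReal x := fun x hx => by
    rw [← ENNReal.ofReal_pow (Real.sqrt_nonneg x), Real.sq_sqrt hx]
  have hprod : ∀ t ∈ Ioo (0 : ℝ) v,
      ‖g t / t‖ₑ = ENNReal.ofReal (√(A t)) * ENNReal.ofReal (√(B t)) := fun t ht => by
    have ht0 : 0 < t := ht.1
    have hAB : A t * B t = (g t / t) ^ 2 := by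
      simp only [A, B]
      rw [Real.rpow_sub_one ht0.ne', Real.rpow_neg ht0.le]
      field_simp
    rw [← ENNReal.ofReal_mul (Real.sqrt_nonneg _), ← Real.sqrt_mul (by positivity), hAB,
      Real.sqrt_sq_eq_abs, Real.enorm_eq_ofReal_abs]
  calc (∫⁻ t in Ioo 0 v, ‖g t / t‖ₑ) ^ 2
      = (∫⁻ t in Ioo 0 v, ENNReal.ofReal (√(A t)) * ENNReal.ofReal (√(B t))) ^ 2 := by
        rw [setLIntegral_congr_fun measurableSet_Ioo hprod]
    _ ≤ (∫⁻ t in Ioo 0 v, ENNReal.ofReal (√(A t)) ^ 2) *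
          ∫⁻ t in Ioo 0 v, ENNReal.ofReal (√(B t)) ^ 2 :=
        sq_lintegral_mul_le (by fun_prop) (by fun_prop)
    _ = (∫⁻ t in Ioo 0 v, ENNReal.ofReal (A t)) * ∫⁻ t in Ioo 0 v, ENNReal.ofReal (B t) := by
        congr 1 <;> refine setLIntegral_congr_fun measurableSet_Ioo fun t ht => hsqrt _ ?_
        · exact Real.rpow_nonneg ht.1.le _
        · have := ht.1; positivity

theorem integrableOn_div_self_of_weightedNormSq_lt_top {lam δ : ℝ} (hlam : 0 < lam) {g : ℝ → ℝ}
    (hg : Measurable g) (hfin : weightedNormSq lam δ g < ⊤) :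
    IntegrableOn (fun t => g t / t) (Ioo 0 δ) := by
  have hpow : ∫⁻ t in Ioo 0 δ, ENNReal.ofReal (t ^ (2 * lam - 1)) < ⊤ :=
    ((intervalIntegral.intervalIntegrable_rpow' (by linarith : -1 < 2 * lam - 1)
      (a := 0) (b := δ)).1.mono_set Ioo_subset_Ioc_self).setLIntegral_lt_top
  have hsq : (∫⁻ t in Ioo 0 δ, ‖g t / t‖ₑ) ^ 2 < ⊤ :=
    (sq_lintegral_enorm_div_self_le (2 * lam) δ hg).trans_lt (ENNReal.mul_lt_top hpow hfin)
  exact ⟨(hg.div measurable_id).aestronglyMeasurable,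
    (ENNReal.pow_lt_top_iff.1 hsq).resolve_right two_ne_zero⟩

theorem ofReal_weighted_sq_primitive_le {lam v : ℝ} (hlam : 0 < lam) (hv : 0 < v) {g : ℝ → ℝ}
    (hg : Measurable g) :
    ENNReal.ofReal (v ^ (-(2 * lam)) * (∫ t in Ioo 0 v, g t / t) ^ 2 / v) ≤
      ENNReal.ofReal (1 / lam) * (ENNReal.ofReal (v ^ (-lam - 1)) *
        ∫⁻ t in Ioo 0 v, ENNReal.ofReal (t ^ (-lam) * g t ^ 2 / t)) := by
  set u := ∫ t in Ioo 0 v, g t / t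
  have hu : ‖u‖ₑ ^ 2 ≤ ENNReal.ofReal (v ^ lam / lam) *
      ∫⁻ t in Ioo 0 v, ENNReal.ofReal (t ^ (-lam) * g t ^ 2 / t) := by
    rw [← lintegral_Ioo_zero_rpow_sub_one hlam hv.le]
    exact (pow_le_pow_left' (enorm_integral_le_lintegral_enorm _) 2).trans
      (sq_lintegral_enorm_div_self_le lam v hg)
  have hweight : v ^ (-(2 * lam) - 1) * (v ^ lam / lam) = 1 / lam * v ^ (-lam - 1) := by
    rw [mul_div_assoc', ← Real.rpow_add hv]
    ring_nf
  calc ENNReal.ofReal (v ^ (-(2 * lam)) * u ^ 2 / v)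
      = ENNReal.ofReal (v ^ (-(2 * lam) - 1)) * ‖u‖ₑ ^ 2 := by
        rw [Real.enorm_eq_ofReal_abs, ← ENNReal.ofReal_pow (abs_nonneg u), sq_abs,
          ← ENNReal.ofReal_mul (Real.rpow_nonneg hv.le _), Real.rpow_sub_one hv.ne']
        ring_nf
    _ ≤ ENNReal.ofReal (v ^ (-(2 * lam) - 1)) * (ENNReal.ofReal (v ^ lam / lam) *
          ∫⁻ t in Ioo 0 v, ENNReal.ofReal (t ^ (-lam) * g t ^ 2 / t)) := by gcongr
    _ = _ := by
        rw [← mul_assoc, ← ENNReal.ofReal_mul (Real.rpow_nonneg hv.le _), hweight,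
          ENNReal.ofReal_mul (by positivity), mul_assoc]

theorem weightedNormSq_primitive_le {lam : ℝ} (hlam : 0 < lam) (δ : ℝ) {g : ℝ → ℝ}
    (hg : Measurable g) :
    weightedNormSq lam δ (fun v => ∫ t in Ioo 0 v, g t / t) ≤
      ENNReal.ofReal (1 / lam ^ 2) * weightedNormSq lam δ g := by
  set φ : ℝ → ℝ≥0∞ := fun t => ENNReal.ofReal (t ^ (-lam) * g t ^ 2 / t)
  set ψ : ℝ → ℝ≥0∞ := fun v => ENNReal.ofReal (v ^ (-lam - 1))
  have htail : ∀ t ∈ Ioo 0 δ, φ t * ∫⁻ v in Ioo t δ, ψ v ≤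
      ENNReal.ofReal (1 / lam) * ENNReal.ofReal (t ^ (-(2 * lam)) * g t ^ 2 / t) := by
    intro t ht
    have ht0 : 0 < t := ht.1
    calc φ t * ∫⁻ v in Ioo t δ, ψ v ≤ φ t * ENNReal.ofReal (t ^ (-lam) / lam) := by
          gcongr
          exact (lintegral_mono_set Ioo_subset_Ioi_self).trans_eq
            (lintegral_Ioi_rpow_neg_sub_one hlam ht0)
      _ = _ := by
          rw [← ENNReal.ofReal_mul (by positivity), ← ENNReal.ofReal_mul (by positivity)]
          congr 1
          rw [show -(2 * lam) = -lam + -lam by ring, Real.rpow_add ht0]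
          ring
  calc weightedNormSq lam δ (fun v => ∫ t in Ioo 0 v, g t / t)
      ≤ ∫⁻ v in Ioo 0 δ, ENNReal.ofReal (1 / lam) * (ψ v * ∫⁻ t in Ioo 0 v, φ t) :=
        setLIntegral_mono' measurableSet_Ioo fun v hv =>
          ofReal_weighted_sq_primitive_le hlam hv.1 hg
    _ = ENNReal.ofReal (1 / lam) * ∫⁻ t in Ioo 0 δ, φ t * ∫⁻ v in Ioo t δ, ψ v := by
        rw [lintegral_const_mul' _ _ ENNReal.ofReal_ne_top,
          lintegral_Ioo_mul_lintegral_Ioo_swap (by fun_prop) (by fun_prop)]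
    _ ≤ ENNReal.ofReal (1 / lam) * ∫⁻ t in Ioo 0 δ,
          ENNReal.ofReal (1 / lam) * ENNReal.ofReal (t ^ (-(2 * lam)) * g t ^ 2 / t) :=
        mul_le_mul_right (setLIntegral_mono' measurableSet_Ioo htail) _
    _ = ENNReal.ofReal (1 / lam ^ 2) * weightedNormSq lam δ g := by
        rw [lintegral_const_mul' _ _ ENNReal.ofReal_ne_top, ← mul_assoc,
          ← ENNReal.ofReal_mul (by positivity)]
        congr 2
        ring

theorem weightedNormSq_const_eq_top {lam δ : ℝ} (hlam : 0 ≤ lam) (hδ : 0 < δ) {c : ℝ}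
    (hc : c ≠ 0) : weightedNormSq lam δ (fun _ => c) = ⊤ := by
  have htop := lintegral_Ioo_zero_rpow_eq_top (by linarith : -(2 * lam) - 1 ≤ -1) hδ
  calc weightedNormSq lam δ (fun _ => c)
      = ∫⁻ t in Ioo 0 δ, ENNReal.ofReal (c ^ 2) * ENNReal.ofReal (t ^ (-(2 * lam) - 1)) := by
        refine setLIntegral_congr_fun measurableSet_Ioo fun t ht => ?_
        rw [← ENNReal.ofReal_mul (by positivity), Real.rpow_sub_one ht.1.ne']
        ring_nf
    _ = ⊤ := by
        rw [lintegral_const_mul' _ _ ENNReal.ofReal_ne_top, htop,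
          ENNReal.mul_top (by simpa using hc)]

theorem weightedNormSq_sub_le {lam δ : ℝ} {f h : ℝ → ℝ}
    (hh : AEMeasurable h (volume.restrict (Ioo 0 δ))) :
    weightedNormSq lam δ (f - h) ≤ 2 * weightedNormSq lam δ f + 2 * weightedNormSq lam δ h := by
  calc weightedNormSq lam δ (f - h)
      ≤ ∫⁻ t in Ioo 0 δ, (2 * ENNReal.ofReal (t ^ (-(2 * lam)) * f t ^ 2 / t) +
          2 * ENNReal.ofReal (t ^ (-(2 * lam)) * h t ^ 2 / t)) := by
        refine setLIntegral_mono' measurableSet_Ioo fun t ht => ?_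
        have ht0 : 0 < t := ht.1
        have hgap : 2 * (t ^ (-(2 * lam)) * f t ^ 2 / t) + 2 * (t ^ (-(2 * lam)) * h t ^ 2 / t)
            - t ^ (-(2 * lam)) * (f t - h t) ^ 2 / t = t ^ (-(2 * lam)) / t * (f t + h t) ^ 2 := by
          ring
        rw [← ENNReal.ofReal_ofNat 2, ← ENNReal.ofReal_mul zero_le_two,
          ← ENNReal.ofReal_mul zero_le_two, ← ENNReal.ofReal_add (by positivity) (by positivity)]
        refine ENNReal.ofReal_le_ofReal ?_
        have : 0 ≤ t ^ (-(2 * lam)) / t * (f t + h t) ^ 2 := by positivity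
        simp only [Pi.sub_apply]
        linarith
    _ = 2 * weightedNormSq lam δ f + 2 * weightedNormSq lam δ h := by
        rw [lintegral_add_right' _ (by fun_prop), lintegral_const_mul' _ _ (by norm_num),
          lintegral_const_mul' _ _ (by norm_num)]
        rfl

theorem eqOn_of_weightedNormSq_lt_top {lam δ : ℝ} (hlam : 0 ≤ lam) {u w : ℝ → ℝ}
    (hu : AEMeasurable u (volume.restrict (Ioo 0 δ))) (hu_fin : weightedNormSq lam δ u < ⊤)
    (hw_fin : weightedNormSq lam δ w < ⊤)
    (hwu : ∀ a ∈ Ioo 0 δ, ∀ b ∈ Ioo 0 δ, w b - w a = u b - u a) :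
    EqOn w u (Ioo 0 δ) := by
  intro v hv
  by_contra hne
  have hconst : weightedNormSq lam δ (w - u) = weightedNormSq lam δ (fun _ => w v - u v) := by
    refine setLIntegral_congr_fun measurableSet_Ioo fun x hx => ?_
    have := hwu v hv x hx
    simp only [Pi.sub_apply]
    rw [show w x - u x = w v - u v by linarith]
  have hle := weightedNormSq_sub_le (lam := lam) (f := w) hu
  rw [hconst, weightedNormSq_const_eq_top hlam (hv.1.trans hv.2) (sub_ne_zero.2 hne), top_le_iff]
    at hle
  exact (ENNReal.add_lt_top.2 ⟨ENNReal.mul_lt_top ENNReal.ofNat_lt_top hw_fin,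
    ENNReal.mul_lt_top ENNReal.ofNat_lt_top hu_fin⟩).ne hle

theorem weighted_b_primitive_pos_weight_general
    (lam δ : ℝ) (hlam : 0 < lam) (g : ℝ → ℝ) (hmeas : Measurable g)
    (hg : ∫⁻ t in Ioo 0 δ, ENNReal.ofReal (t ^ (-(2 * lam)) * (g t) ^ 2 / t) < ⊤) :
    -- (i) integrability of `t ↦ g t / t` near `0`, so `u v := ∫ t in Ioo 0 v, g t / t` is defined
    (∀ v ∈ Ioo (0 : ℝ) δ, IntegrableOn (fun t => g t / t) (Ioo 0 v)) ∧
    -- (ii) the weighted L² bound, with constant `1/λ²` independent of `δ`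
    (∫⁻ v in Ioo 0 δ,
        ENNReal.ofReal (v ^ (-(2 * lam)) * (∫ t in Ioo 0 v, g t / t) ^ 2 / v) ≤
      ENNReal.ofReal (1 / lam ^ 2) *
        ∫⁻ t in Ioo 0 δ, ENNReal.ofReal (t ^ (-(2 * lam)) * (g t) ^ 2 / t)) ∧
    -- (iii) local absolute continuity: `u` is an indefinite integral on compact subintervals,
    -- and `v · u'(v) = g v` for a.e. `v ∈ (0,δ)`
    (∀ a ∈ Ioo (0 : ℝ) δ, ∀ b ∈ Ioo (0 : ℝ) δ,
        (∫ t in Ioo 0 b, g t / t) - (∫ t in Ioo 0 a, g t / t) = ∫ t in a..b, g t / t) ∧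
    (∀ᵐ v ∂(volume.restrict (Ioo 0 δ)),
        HasDerivAt (fun x => ∫ t in Ioo 0 x, g t / t) (g v / v) v) ∧
    -- (iv) uniqueness: any locally absolutely continuous `w` with `v·w' = g` a.e. (equivalently,
    -- an indefinite integral of `g t / t` on subintervals) lying in the weighted space equals `u`
    (∀ w : ℝ → ℝ,
        (∀ a ∈ Ioo (0 : ℝ) δ, ∀ b ∈ Ioo (0 : ℝ) δ, w b - w a = ∫ t in a..b, g t / t) →
        (∫⁻ v in Ioo 0 δ, ENNReal.ofReal (v ^ (-(2 * lam)) * (w v) ^ 2 / v) < ⊤) →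
        ∀ v ∈ Ioo (0 : ℝ) δ, w v = ∫ t in Ioo 0 v, g t / t) := by
  have hint : IntegrableOn (fun t => g t / t) (Ioo 0 δ) :=
    integrableOn_div_self_of_weightedNormSq_lt_top hlam hmeas hg
  have hbound := weightedNormSq_primitive_le hlam δ hmeas
  have hdiff := fun a (ha : a ∈ Ioo 0 δ) b (hb : b ∈ Ioo 0 δ) =>
    integral_Ioo_zero_sub_integral_Ioo_zero hint ha hb
  refine ⟨fun v hv => hint.mono_set (Ioo_subset_Ioo_right hv.2.le), hbound, hdiff,
    ae_hasDerivAt_integral_Ioo_zero hint, fun w hw hw_fin => ?_⟩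
  have hu_meas : AEMeasurable (fun v => ∫ t in Ioo 0 v, g t / t) (volume.restrict (Ioo 0 δ)) :=
    ((continuousOn_integral_Ioo_zero hint).mono Ioo_subset_Icc_self).aemeasurable
      measurableSet_Ioo
  exact eqOn_of_weightedNormSq_lt_top hlam.le hu_meas
    (hbound.trans_lt (ENNReal.mul_lt_top ENNReal.ofReal_lt_top hg)) hw_fin
    fun a ha b hb => (hw a ha b hb).trans (hdiff a ha b hb).symm

/-- For `λ > 0`, the map `G_{λ,δ}(g·dv/v)(v) = ∫₀^v g(t) dt/t` is a well-defined bounded inverse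
(with norm `1/λ` independent of `δ`) of `d = (dv/v) ∧ (v ∂/∂v)` on `v^λ L²_b((0,δ))`:
the primitive `u(v) = ∫₀^v g(t)/t dt` is well defined, satisfies the weighted `L²` bound,
is locally absolutely continuous with `v·u'(v) = g(v)` a.e., and is the unique such primitive
in the weighted space. -/
theorem weighted_b_primitive_pos_weight
    (lam δ : ℝ) (hlam : 0 < lam) (hδ : 0 < δ) (g : ℝ → ℝ) (hmeas : Measurable g)
    (hg : ∫⁻ t in Ioo 0 δ, ENNReal.ofReal (t ^ (-(2 * lam)) * (g t) ^ 2 / t) < ⊤) :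
    -- (i) integrability of `t ↦ g t / t` near `0`, so `u v := ∫ t in Ioo 0 v, g t / t` is defined
    (∀ v ∈ Ioo (0 : ℝ) δ, IntegrableOn (fun t => g t / t) (Ioo 0 v)) ∧
    -- (ii) the weighted L² bound, with constant `1/λ²` independent of `δ`
    (∫⁻ v in Ioo 0 δ,
        ENNReal.ofReal (v ^ (-(2 * lam)) * (∫ t in Ioo 0 v, g t / t) ^ 2 / v) ≤
      ENNReal.ofReal (1 / lam ^ 2) *
        ∫⁻ t in Ioo 0 δ, ENNReal.ofReal (t ^ (-(2 * lam)) * (g t) ^ 2 / t)) ∧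
    -- (iii) local absolute continuity: `u` is an indefinite integral on compact subintervals,
    -- and `v · u'(v) = g v` for a.e. `v ∈ (0,δ)`
    (∀ a ∈ Ioo (0 : ℝ) δ, ∀ b ∈ Ioo (0 : ℝ) δ,
        (∫ t in Ioo 0 b, g t / t) - (∫ t in Ioo 0 a, g t / t) = ∫ t in a..b, g t / t) ∧
    (∀ᵐ v ∂(volume.restrict (Ioo 0 δ)),
        HasDerivAt (fun x => ∫ t in Ioo 0 x, g t / t) (g v / v) v) ∧
    -- (iv) uniqueness: any locally absolutely continuous `w` with `v·w' = g` a.e. (equivalently,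
    -- an indefinite integral of `g t / t` on subintervals) lying in the weighted space equals `u`
    (∀ w : ℝ → ℝ,
        (∀ a ∈ Ioo (0 : ℝ) δ, ∀ b ∈ Ioo (0 : ℝ) δ, w b - w a = ∫ t in a..b, g t / t) →
        (∫⁻ v in Ioo 0 δ, ENNReal.ofReal (v ^ (-(2 * lam)) * (w v) ^ 2 / v) < ⊤) →
        ∀ v ∈ Ioo (0 : ℝ) δ, w v = ∫ t in Ioo 0 v, g t / t) :=
  weighted_b_primitive_pos_weight_general lam δ hlam g hmeas hg
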